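/- arXiv:0812.1389 — 3 statements merged into one kernel-verified Lean document; each statement's English description precedes it below -/
import Mathlib

section
/- Let k ≥ 2 and let n₁, …, n_k be positive integers with n_k ≥ 2, and let N and the matrices M_t = [[a_t, b_t],[c_t, d_t]] (0 ≤ t ≤ N) be as defined below. Then for every t with 0 ≤ t ≤ N: gcd(a_t + c_t, b_t + d_t) = 1 and a_t + c_t > b_t + d_t ≥ 2. Moreover (a_0 + c_0, b_0 + d_0) = (2n₁ + 1, 2). (Thus each intermediate knot in the cabling sequence producing the middle tunnel is a torus knot, the first one being the (2n₁+1, 2) torus knot.) -/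
/-- The matrix `U = [[1,1],[0,1]]`. -/
def U : Matrix (Fin 2) (Fin 2) ℤ := !![1, 1; 0, 1]

/-- The matrix `L = [[1,0],[1,1]]`. -/
def L : Matrix (Fin 2) (Fin 2) ℤ := !![1, 0; 1, 1]

/-- The matrix `A_i` determined by `n₂, …, n_k`: `A_i = L` for `i < 0`, and for `i ≥ 0`
the letters alternate `U, L, U, L, …` in blocks of lengths `n₂, n₃, …, n_k`; that is,
`A_i = U` exactly when the number of partial sums `n₂ + ⋯ + n_j` (`2 ≤ j ≤ k`) that
are `≤ i` is even. -/
def Amat (n : ℕ → ℕ) (k : ℕ) (i : ℤ) : Matrix (Fin 2) (Fin 2) ℤ :=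
  if i < 0 then L
  else if Even ((Finset.Icc 2 k).filter
      (fun j => ((∑ m ∈ Finset.Icc 2 j, n m : ℕ) : ℤ) ≤ i)).card then U else L

/-- The product `M_t = A_t · A_{t−1} ⋯ A_0 · A_{−1} ⋯ A_{−n₁}`, with factors in
descending order of index. -/
def Mprod (n : ℕ → ℕ) (k : ℕ) (t : ℤ) : Matrix (Fin 2) (Fin 2) ℤ :=
  ((List.range (t + n 1 + 1).toNat).map (fun i => Amat n k (t - i))).prod

/-!
Every `M_t` is obtained from `M_0 = U · L^{n₁} = [[n₁+1, 1], [n₁, 1]]` by left multiplications by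
`U` and `L`. Both preserve the conditions `det M = 1`, `1 ≤ b, d`, `b < a`, `d ≤ c`, which
already hold for `M_0`. For such a matrix `(a + c) d - (b + d) c = det M = 1`, so the column
sums are coprime, and `a + c > b + d ≥ 2`.
-/

structure Admissible (M : Matrix (Fin 2) (Fin 2) ℤ) : Prop where
  det_eq_one : M.det = 1
  one_le_b : 1 ≤ M 0 1
  one_le_d : 1 ≤ M 1 1
  b_lt_a : M 0 1 < M 0 0
  d_le_c : M 1 1 ≤ M 1 0

lemma U_mul_eq (M : Matrix (Fin 2) (Fin 2) ℤ) :
    U * M = !![M 0 0 + M 1 0, M 0 1 + M 1 1; M 1 0, M 1 1] := by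
  ext i j; fin_cases i <;> fin_cases j <;> simp [U, Matrix.mul_apply]

lemma L_mul_eq (M : Matrix (Fin 2) (Fin 2) ℤ) :
    L * M = !![M 0 0, M 0 1; M 0 0 + M 1 0, M 0 1 + M 1 1] := by
  ext i j; fin_cases i <;> fin_cases j <;> simp [L, Matrix.mul_apply]

lemma det_U : U.det = 1 := by simp [U, Matrix.det_fin_two]

lemma det_L : L.det = 1 := by simp [L, Matrix.det_fin_two]

lemma L_pow (m : ℕ) : L ^ m = !![1, 0; (m : ℤ), 1] := by
  induction m with
  | zero => ext i j; fin_cases i <;> fin_cases j <;> rfl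
  | succ m ih =>
    rw [pow_succ', ih, L_mul_eq]
    ext i j; fin_cases i <;> fin_cases j <;> simp [add_comm]

namespace Admissible

variable {M : Matrix (Fin 2) (Fin 2) ℤ}

lemma U_mul (h : Admissible M) : Admissible (U * M) where
  det_eq_one := by rw [Matrix.det_mul, det_U, h.det_eq_one, one_mul]
  one_le_b := by rw [U_mul_eq]; simp; linarith [h.one_le_b, h.one_le_d]
  one_le_d := by rw [U_mul_eq]; simpa using h.one_le_d
  b_lt_a := by rw [U_mul_eq]; simp; linarith [h.b_lt_a, h.d_le_c]
  d_le_c := by rw [U_mul_eq]; simpa using h.d_le_c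

lemma L_mul (h : Admissible M) : Admissible (L * M) where
  det_eq_one := by rw [Matrix.det_mul, det_L, h.det_eq_one, one_mul]
  one_le_b := by rw [L_mul_eq]; simpa using h.one_le_b
  one_le_d := by rw [L_mul_eq]; simp; linarith [h.one_le_b, h.one_le_d]
  b_lt_a := by rw [L_mul_eq]; simpa using h.b_lt_a
  d_le_c := by rw [L_mul_eq]; simp; linarith [h.b_lt_a, h.d_le_c]

lemma isCoprime_col_sums (h : Admissible M) :
    IsCoprime (M 0 0 + M 1 0) (M 0 1 + M 1 1) :=
  ⟨M 1 1, -M 1 0, by linear_combination (Matrix.det_fin_two M).symm.trans h.det_eq_one⟩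

lemma col_sum_lt (h : Admissible M) : M 0 1 + M 1 1 < M 0 0 + M 1 0 := by
  linarith [h.b_lt_a, h.d_le_c]

lemma two_le_col_sum (h : Admissible M) : 2 ≤ M 0 1 + M 1 1 := by
  linarith [h.one_le_b, h.one_le_d]

end Admissible

section Mprod

variable (n : ℕ → ℕ) (k : ℕ)

lemma Amat_eq_U_or_L (i : ℤ) : Amat n k i = U ∨ Amat n k i = L := by
  unfold Amat; split_ifs <;> simp

lemma Amat_of_neg {i : ℤ} (hi : i < 0) : Amat n k i = L := if_pos hi

lemma Amat_zero (hn2 : 1 ≤ n 2) : Amat n k 0 = U := by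
  have hnone : ∀ j ∈ Finset.Icc 2 k, ¬ ((∑ m ∈ Finset.Icc 2 j, n m : ℕ) : ℤ) ≤ 0 := by
    intro j hj
    have : n 2 ≤ ∑ m ∈ Finset.Icc 2 j, n m :=
      Finset.single_le_sum (fun _ _ => Nat.zero_le _)
        (Finset.mem_Icc.mpr ⟨le_rfl, (Finset.mem_Icc.mp hj).1⟩)
    omega
  rw [Amat, if_neg (lt_irrefl 0), Finset.filter_eq_empty_iff.mpr hnone]
  simp

/-- In `Mprod` the index list is `List.range _ : List ℕ` coerced to `List ℤ` by the monadic
lift; this rewrites it as a plain `List.map` over `List.range _`. -/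
lemma Mprod_eq_prod_range (t : ℤ) :
    Mprod n k t = ((List.range (t + n 1 + 1).toNat).map
      (fun i : ℕ => Amat n k (t - i))).prod := by
  simp only [Mprod, List.pure_def, List.bind_eq_flatMap, ← List.map_eq_flatMap, List.map_map]
  rfl

lemma Mprod_succ {t : ℤ} (ht : 0 ≤ t + n 1 + 1) :
    Mprod n k (t + 1) = Amat n k (t + 1) * Mprod n k t := by
  rw [Mprod_eq_prod_range, Mprod_eq_prod_range,
    show (t + 1 + n 1 + 1).toNat = (t + n 1 + 1).toNat + 1 by omega,
    List.range_succ_eq_map, List.map_cons, List.prod_cons, List.map_map]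
  congr 2
  · simp
  · exact List.map_congr_left fun i _ => by simp only [Function.comp, Nat.cast_succ]; ring_nf

lemma Mprod_zero : Mprod n k 0 = Amat n k 0 * L ^ n 1 := by
  rw [Mprod_eq_prod_range, show ((0 : ℤ) + n 1 + 1).toNat = n 1 + 1 by omega,
    List.range_succ_eq_map, List.map_cons, List.prod_cons, List.map_map]
  have hL : ∀ i ∈ List.range (n 1), ((fun i : ℕ => Amat n k (0 - i)) ∘ Nat.succ) i = L :=
    fun i _ => Amat_of_neg n k (by simp; omega)
  rw [List.map_congr_left hL, List.map_const', List.length_range, List.prod_replicate,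
    Nat.cast_zero, sub_zero]

lemma Mprod_zero_eq (hn2 : 1 ≤ n 2) :
    Mprod n k 0 = !![(n 1 : ℤ) + 1, 1; (n 1 : ℤ), 1] := by
  rw [Mprod_zero, Amat_zero n k hn2, L_pow, U_mul_eq]
  simp [add_comm]

lemma admissible_Mprod (hn1 : 1 ≤ n 1) (hn2 : 1 ≤ n 2) :
    ∀ t : ℤ, 0 ≤ t → Admissible (Mprod n k t) := by
  refine Int.leInduction ?_ fun t ht ih => ?_
  · rw [Mprod_zero_eq n k hn2]
    constructor <;> simp [Matrix.det_fin_two] <;> omega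
  · rw [Mprod_succ n k (by omega)]
    rcases Amat_eq_U_or_L n k (t + 1) with hA | hA <;> rw [hA]
    · exact ih.U_mul
    · exact ih.L_mul

end Mprod

theorem stmt2_general (k : ℕ) (hk : 2 ≤ k) (n : ℕ → ℕ)
    (hn : ∀ j, 1 ≤ j → j ≤ k → 1 ≤ n j)
    (N : ℤ) :
    (∀ t : ℤ, 0 ≤ t → t ≤ N →
      Int.gcd (Mprod n k t 0 0 + Mprod n k t 1 0)
        (Mprod n k t 0 1 + Mprod n k t 1 1) = 1 ∧
      Mprod n k t 0 1 + Mprod n k t 1 1 < Mprod n k t 0 0 + Mprod n k t 1 0 ∧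
      2 ≤ Mprod n k t 0 1 + Mprod n k t 1 1) ∧
    Mprod n k 0 0 0 + Mprod n k 0 1 0 = 2 * (n 1 : ℤ) + 1 ∧
    Mprod n k 0 0 1 + Mprod n k 0 1 1 = 2 := by
  have hn1 : 1 ≤ n 1 := hn 1 le_rfl (by omega)
  have hn2 : 1 ≤ n 2 := hn 2 one_le_two hk
  refine ⟨fun t ht _ => ?_, ?_, ?_⟩
  · have hM := admissible_Mprod n k hn1 hn2 t ht
    exact ⟨Int.isCoprime_iff_gcd_eq_one.mp hM.isCoprime_col_sums, hM.col_sum_lt,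
      hM.two_le_col_sum⟩
  · simp [Mprod_zero_eq n k hn2]; ring
  · simp [Mprod_zero_eq n k hn2]

/-- For `k ≥ 2`, positive integers `n₁, …, n_k` with `n_k ≥ 2`, and
`N = n₂ + ⋯ + n_k − 2`: writing `M_t = [[a_t, b_t],[c_t, d_t]]`, for every
`0 ≤ t ≤ N` one has `gcd(a_t + c_t, b_t + d_t) = 1` and `a_t + c_t > b_t + d_t ≥ 2`;
moreover `(a_0 + c_0, b_0 + d_0) = (2n₁ + 1, 2)`. -/
theorem stmt2 (k : ℕ) (hk : 2 ≤ k) (n : ℕ → ℕ)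
    (hn : ∀ j, 1 ≤ j → j ≤ k → 1 ≤ n j) (hnk : 2 ≤ n k)
    (N : ℤ) (hN : N = (∑ j ∈ Finset.Icc 2 k, (n j : ℤ)) - 2) :
    (∀ t : ℤ, 0 ≤ t → t ≤ N →
      Int.gcd (Mprod n k t 0 0 + Mprod n k t 1 0)
        (Mprod n k t 0 1 + Mprod n k t 1 1) = 1 ∧
      Mprod n k t 0 1 + Mprod n k t 1 1 < Mprod n k t 0 0 + Mprod n k t 1 0 ∧
      2 ≤ Mprod n k t 0 1 + Mprod n k t 1 1) ∧
    Mprod n k 0 0 0 + Mprod n k 0 1 0 = 2 * (n 1 : ℤ) + 1 ∧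
    Mprod n k 0 0 1 + Mprod n k 0 1 1 = 2 :=
  stmt2_general k hk n hn N
end

section
/- Let p and q be coprime integers with 2 ≤ p < q, and suppose that q ≢ 1 (mod p) and q ≢ −1 (mod p). Then there exists an integer k with ⌊q/p⌋ + 2 ≤ k ≤ q − 2 such that ⌈kp/q⌉ = ⌈(k+1)p/q⌉. -/
/-!
The sequence `c k = ⌈kp/q⌉` is monotone with `c q = p`. Write `q = ap + r` with `a = ⌊q/p⌋`;
coprimality and `q ≢ ±1 (mod p)` force `2 ≤ r ≤ p - 2`. If `c` rose at every step from
`k = a + 2` to `k = q - 1`, it would gain `q - a - 3`, more than the room `p - c (a + 2)`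
left below `p`. This is an integer inequality which is tight only for `a = 1, r = 2`, and
there coprimality makes `p` odd, so `p ≥ r + 2` gives `p ≥ 5`, which is just enough.
-/

theorem Monotone.exists_apply_eq_apply_add_one_of_lt {f : ℤ → ℤ} (hf : Monotone f) {m n : ℤ}
    (hmn : m ≤ n) (h : f n < f m + (n - m)) : ∃ k, m ≤ k ∧ k < n ∧ f k = f (k + 1) := by
  by_contra! hne
  have climb : ∀ j, m ≤ j → j ≤ n → f m + (j - m) ≤ f j := by
    intro j hmj
    induction j, hmj using Int.leInduction with
    | base => simp
    | succ j hmj ih =>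
      intro hjn
      have hstep : f j < f (j + 1) := (hf (by omega)).lt_of_ne (hne j hmj (by omega))
      have := ih (by omega)
      omega
  exact (climb n hmn le_rfl).not_gt h

/-- The paper's `p_k`. -/
def ceilMulDiv (p q k : ℤ) : ℤ := ⌈((k : ℚ) * p) / q⌉

section ceilMulDiv

variable {p q : ℤ}

theorem ceilMulDiv_mono (hp : 0 ≤ p) (hq : 0 < q) : Monotone (ceilMulDiv p q) := by
  intro k l hkl
  apply Int.ceil_mono
  gcongr

theorem ceilMulDiv_self (hq : q ≠ 0) : ceilMulDiv p q q = p := by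
  simp [ceilMulDiv, hq]

theorem lt_ceilMulDiv_iff (hq : 0 < q) {n k : ℤ} : n < ceilMulDiv p q k ↔ n * q < k * p := by
  rw [ceilMulDiv, Int.lt_ceil, lt_div_iff₀ (by exact_mod_cast hq)]
  norm_cast

end ceilMulDiv

theorem IsCoprime.emod_right {p q : ℤ} (h : IsCoprime p q) : IsCoprime p (q % p) := by
  simpa [Int.emod_def, sub_eq_add_neg] using h.add_mul_left_right (-(q / p))

theorem two_le_emod_and_emod_le_sub_two {p q : ℤ} (hp : 2 ≤ p) (hcop : IsCoprime p q)
    (h1 : ¬ q ≡ 1 [ZMOD p]) (h2 : ¬ q ≡ -1 [ZMOD p]) : 2 ≤ q % p ∧ q % p ≤ p - 2 := by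
  have hr0 : q % p ≠ 0 := by
    intro h
    have := hcop.emod_right
    rw [h, isCoprime_zero_right, Int.isUnit_iff] at this
    omega
  have hr1 : q % p ≠ 1 := fun h => h1 ((Int.mod_modEq q p).symm.trans (by rw [h]))
  have hr2 : q % p ≠ p - 1 := fun h =>
    h2 ((Int.mod_modEq q p).symm.trans (by rw [h, Int.modEq_iff_dvd]; exact ⟨-1, by ring⟩))
  have := Int.emod_nonneg q (by omega : p ≠ 0)
  have := Int.emod_lt_of_pos q (by omega : 0 < p)
  omega

theorem ceilMulDiv_sub_one_lt {p q : ℤ} (hpq : p < q) (hcop : IsCoprime p q) (hr : 2 ≤ q % p)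
    (hrp : q % p ≤ p - 2) :
    ceilMulDiv p q (q - 1) < ceilMulDiv p q (q / p + 2) + (q - 1 - (q / p + 2)) := by
  have hp : 0 < p := by omega
  have hq : 0 < q := by omega
  calc ceilMulDiv p q (q - 1) ≤ ceilMulDiv p q q := ceilMulDiv_mono hp.le hq (by omega)
    _ = p := ceilMulDiv_self hq.ne'
    _ < _ := by
      rw [← sub_lt_iff_lt_add, lt_ceilMulDiv_iff hq]
      have hodd : q % p = 2 → Odd p := fun h => by simpa [h] using hcop.emod_right
      have hdiv : p * (q / p) + q % p = q := Int.mul_ediv_add_emod q p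
      have ha : 1 ≤ q / p := (Int.le_ediv_iff_mul_le hp).mpr (by omega)
      generalize q / p = a at *
      generalize q % p = r at *
      subst hdiv
      -- the left factor is `4 - r - (a - 1) * (p - 1) ≤ 2`, with equality only for `a = 1, r = 2`
      by_cases hcase : a = 1 ∧ r = 2
      · obtain ⟨rfl, rfl⟩ := hcase
        have : 5 ≤ p := by
          obtain ⟨m, rfl⟩ := hodd rfl
          omega
        nlinarith
      · have : p - (p * a + r) + a + 3 ≤ 1 := by
          rcases not_and_or.mp hcase with h | h
          · nlinarith [mul_le_mul_of_nonneg_right (by omega : (1 : ℤ) ≤ a - 1) (by omega : 0 ≤ p - 1)]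
          · have : 3 ≤ r := by omega
            nlinarith [mul_nonneg (by omega : 0 ≤ a - 1) (by omega : 0 ≤ p - 1)]
        nlinarith

/-- For coprime `2 ≤ p < q` with `q ≢ ±1 (mod p)`, there is an integer `k` with
`⌊q/p⌋ + 2 ≤ k ≤ q − 2` and `⌈kp/q⌉ = ⌈(k+1)p/q⌉`. -/
theorem stmt6 (p q : ℤ) (hp : 2 ≤ p) (hpq : p < q) (hcop : IsCoprime p q)
    (h1 : ¬ q ≡ 1 [ZMOD p]) (h2 : ¬ q ≡ -1 [ZMOD p]) :
    ∃ k : ℤ, ⌊(q : ℚ) / p⌋ + 2 ≤ k ∧ k ≤ q - 2 ∧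
      ⌈((k : ℚ) * p) / q⌉ = ⌈((k : ℚ) + 1) * p / q⌉ := by
  have hq : 0 < q := by omega
  obtain ⟨hr, hrp⟩ := two_le_emod_and_emod_le_sub_two hp hcop h1 h2
  have hfloor : ⌊(q : ℚ) / p⌋ = q / p := by
    rw [← Int.toNat_of_nonneg (by omega : 0 ≤ p)]
    exact_mod_cast Rat.floor_intCast_div_natCast q p.toNat
  have hrange : q / p + 2 ≤ q - 1 := by
    have := Int.mul_ediv_add_emod q p
    have := Int.ediv_nonneg hq.le (by omega : 0 ≤ p)
    nlinarith
  obtain ⟨k, hk1, hk2, hk⟩ := (ceilMulDiv_mono (by omega) hq).exists_apply_eq_apply_add_one_of_lt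
    hrange (ceilMulDiv_sub_one_lt hpq hcop hr hrp)
  refine ⟨k, hfloor ▸ hk1, by omega, ?_⟩
  simpa [ceilMulDiv] using hk
end

section
/- Let p > q ≥ 2 be coprime integers, and suppose p/q = [n₁, …, n_k] where k ≥ 2, all n_j are positive integers, and n_k ≥ 2. Then p ≡ 1 (mod q) or p ≡ −1 (mod q) if and only if k = 2, or k = 3 and n₂ = 1. -/
/-!
Write `p / q = n₁ + 1/x` with `x = [n₂, …, n_k] > 1`. The fractional part of `p / q` is
`(p mod q) / q = 1/x`, so `p ≡ 1 (mod q)` says that `x` is an integer and `p ≡ -1 (mod q)`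
says that `(1 - 1/x)⁻¹ = 1 + 1/(x - 1)` is an integer. Since every tail `[n_j, …, n_k]` of
the continued fraction with `j < k` exceeds `1`, the only integral tails are the last
entries, which pins down `k` in each case.
-/

/-- The value of the continued fraction `[n_j, n_{j+1}, …, n_k]`:
`cfVal n j k = n_j + 1/(n_{j+1} + 1/(⋯ + 1/n_k))`. -/
def cfVal (n : ℕ → ℕ) (j k : ℕ) : ℚ :=
  if _ : k ≤ j then (n j : ℚ) else (n j : ℚ) + (cfVal n (j + 1) k)⁻¹
termination_by k - j
decreasing_by omega

theorem exists_int_inv_eq_iff {K : Type*} [Field K] [LinearOrder K] [IsStrictOrderedRing K]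
    {y : K} (hy : 1 ≤ y) : (∃ m : ℤ, y⁻¹ = m) ↔ y = 1 := by
  constructor
  · rintro ⟨m, hm⟩
    have hpos : (0 : K) < m := hm ▸ inv_pos.2 (zero_lt_one.trans_le hy)
    have hle : (m : K) ≤ 1 := hm ▸ inv_le_one_of_one_le₀ hy
    have hm1 : m = 1 := by
      have : 0 < m := by exact_mod_cast hpos
      have : m ≤ 1 := by exact_mod_cast hle
      omega
    rw [hm1, Int.cast_one, inv_eq_one] at hm
    exact hm
  · rintro rfl
    exact ⟨1, by simp⟩

theorem Int.modEq_one_iff_exists_int_inv_fract {p q : ℤ} (hq : 1 < q) (hcop : IsCoprime p q) :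
    p ≡ 1 [ZMOD q] ↔ ∃ m : ℤ, (Int.fract ((p : ℚ) / q))⁻¹ = m := by
  have hq0 : 0 < q := by omega
  have hfract : Int.fract ((p : ℚ) / q) = ((p % q : ℤ) : ℚ) / q := by
    lift q to ℕ using hq0.le
    exact Int.fract_div_intCast_eq_div_intCast_mod
  have hmod : p ≡ 1 [ZMOD q] ↔ p % q = 1 := by
    rw [Int.ModEq, Int.emod_eq_of_lt zero_le_one hq]
  rw [hfract, inv_div, hmod]
  set r := p % q
  have hr0 : 0 ≤ r := Int.emod_nonneg p hq0.ne'
  have hrq : IsCoprime r q := by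
    rw [Int.isCoprime_iff_gcd_eq_one, Int.gcd_emod, ← Int.isCoprime_iff_gcd_eq_one]
    exact hcop
  constructor
  · intro h
    exact ⟨q, by rw [h]; simp⟩
  · rintro ⟨m, hm⟩
    -- `q / 0 = 0` is integral too, so `r = 0` has to be excluded separately.
    have hr : r ≠ 0 := by
      rintro hr
      have := (hr ▸ hrq).isUnit_of_dvd' (dvd_zero q) dvd_rfl
      rw [Int.isUnit_iff] at this
      omega
    have hqr : q = m * r := by
      rw [div_eq_iff (by exact_mod_cast hr)] at hm
      exact_mod_cast hm
    have := hrq.isUnit_of_dvd' dvd_rfl ⟨m, by rw [hqr, mul_comm]⟩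
    rw [Int.isUnit_iff] at this
    omega

section ContinuedFraction

variable {n : ℕ → ℕ} {k : ℕ}

theorem cfVal_of_le {j : ℕ} (h : k ≤ j) : cfVal n j k = n j := by
  rw [cfVal, dif_pos h]

theorem cfVal_of_lt {j : ℕ} (h : j < k) : cfVal n j k = n j + (cfVal n (j + 1) k)⁻¹ := by
  rw [cfVal, dif_neg h.not_ge]

theorem one_lt_cfVal {j : ℕ} (hn : ∀ i, j ≤ i → i ≤ k → 1 ≤ n i) (hnk : 2 ≤ n k) (hjk : j ≤ k) :
    1 < cfVal n j k := by
  obtain rfl | hlt := hjk.eq_or_lt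
  · rw [cfVal_of_le le_rfl]
    exact_mod_cast hnk
  · have htail : 1 < cfVal n (j + 1) k :=
      one_lt_cfVal (fun i hi hik => hn i (by omega) hik) hnk hlt
    have hnj : (1 : ℚ) ≤ n j := by exact_mod_cast hn j le_rfl hlt.le
    have := inv_pos.2 (zero_lt_one.trans htail)
    rw [cfVal_of_lt hlt]
    linarith
termination_by k - j

theorem fract_cfVal {j : ℕ} (hn : ∀ i, j < i → i ≤ k → 1 ≤ n i) (hnk : 2 ≤ n k) (hjk : j < k) :
    Int.fract (cfVal n j k) = (cfVal n (j + 1) k)⁻¹ := by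
  have htail : 1 < cfVal n (j + 1) k := one_lt_cfVal hn hnk hjk
  refine Int.fract_eq_iff.2
    ⟨(inv_pos.2 (zero_lt_one.trans htail)).le, inv_lt_one_of_one_lt₀ htail, n j, ?_⟩
  rw [cfVal_of_lt hjk]
  push_cast
  ring

theorem exists_int_eq_cfVal_iff {j : ℕ} (hn : ∀ i, j < i → i ≤ k → 1 ≤ n i) (hnk : 2 ≤ n k)
    (hjk : j ≤ k) : (∃ m : ℤ, cfVal n j k = m) ↔ k = j := by
  constructor
  · rintro ⟨m, hm⟩
    by_contra hne
    have hlt : j < k := hjk.lt_of_ne' hne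
    have hfract := fract_cfVal hn hnk hlt
    rw [hm, Int.fract_intCast] at hfract
    exact (inv_pos.2 (zero_lt_one.trans (one_lt_cfVal hn hnk hlt))).ne
      hfract
  · rintro rfl
    exact ⟨n k, by rw [cfVal_of_le le_rfl]; norm_cast⟩

theorem exists_int_inv_one_sub_inv_cfVal_iff {j : ℕ} (hn : ∀ i, j ≤ i → i ≤ k → 1 ≤ n i)
    (hnk : 2 ≤ n k) (hjk : j ≤ k) :
    (∃ m : ℤ, (1 - (cfVal n j k)⁻¹)⁻¹ = m) ↔ (k = j ∧ n j = 2) ∨ (k = j + 1 ∧ n j = 1) := by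
  set x := cfVal n j k
  have hx1 : 1 < x := one_lt_cfVal hn hnk hjk
  have hshift : (∃ m : ℤ, (1 - x⁻¹)⁻¹ = m) ↔ ∃ m : ℤ, (x - 1)⁻¹ = m := by
    have hid : (1 - x⁻¹)⁻¹ = (x - 1)⁻¹ + 1 := by
      have : x - 1 ≠ 0 := by linarith
      field_simp
      ring
    rw [hid]
    exact ⟨fun ⟨m, hm⟩ => ⟨m - 1, by push_cast; linarith⟩,
      fun ⟨m, hm⟩ => ⟨m + 1, by push_cast; linarith⟩⟩
  rw [hshift]
  obtain rfl | hlt := hjk.eq_or_lt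
  · have hxn : x = n j := cfVal_of_le le_rfl
    have hnj : (2 : ℚ) ≤ n j := by exact_mod_cast hnk
    rw [exists_int_inv_eq_iff (by linarith), hxn]
    constructor
    · intro h
      exact Or.inl ⟨rfl, by exact_mod_cast (by linarith : (n j : ℚ) = 2)⟩
    · rintro (⟨-, h⟩ | ⟨h, -⟩)
      · rw [h]; norm_num
      · omega
  · set z := cfVal n (j + 1) k
    have hz1 : 1 < z := one_lt_cfVal (fun i hi hik => hn i (by omega) hik) hnk hlt
    have hxz : x = n j + z⁻¹ := cfVal_of_lt hlt
    obtain hnj | hnj : n j = 1 ∨ 2 ≤ n j := by have := hn j le_rfl hjk; omega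
    · have : x - 1 = z⁻¹ := by rw [hxz, hnj]; push_cast; ring
      rw [this, inv_inv, exists_int_eq_cfVal_iff (fun i hi hik => hn i (by omega) hik) hnk hlt]
      omega
    · have hnj' : (2 : ℚ) ≤ n j := by exact_mod_cast hnj
      have := inv_pos.2 (zero_lt_one.trans hz1)
      rw [exists_int_inv_eq_iff (by linarith)]
      constructor
      · intro h; linarith
      · omega

end ContinuedFraction

theorem stmt13_general (p q : ℤ) (hq : 2 ≤ q) (hcop : IsCoprime p q)
    (k : ℕ) (hk : 2 ≤ k) (n : ℕ → ℕ) (hn : ∀ j, 1 ≤ j → j ≤ k → 1 ≤ n j)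
    (hnk : 2 ≤ n k) (hcf : (p : ℚ) / q = cfVal n 1 k) :
    (p ≡ 1 [ZMOD q] ∨ p ≡ -1 [ZMOD q]) ↔ (k = 2 ∨ (k = 3 ∧ n 2 = 1)) := by
  have hn2 : ∀ i, 2 ≤ i → i ≤ k → 1 ≤ n i := fun i hi hik => hn i (by omega) hik
  have hx : 1 < cfVal n 2 k := one_lt_cfVal hn2 hnk hk
  have hfract : Int.fract ((p : ℚ) / q) = (cfVal n 2 k)⁻¹ := by
    rw [hcf, fract_cfVal hn2 hnk hk]
  have hfract_neg : Int.fract (((-p : ℤ) : ℚ) / q) = 1 - (cfVal n 2 k)⁻¹ := by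
    rw [Int.cast_neg, neg_div, Int.fract_neg (hfract ▸ (inv_pos.2 (by linarith)).ne'), hfract]
  have hone : p ≡ 1 [ZMOD q] ↔ k = 2 := by
    rw [Int.modEq_one_iff_exists_int_inv_fract (by omega) hcop, hfract, inv_inv,
      exists_int_eq_cfVal_iff (fun i hi => hn2 i hi.le) hnk hk]
  have hneg_one : p ≡ -1 [ZMOD q] ↔ (k = 2 ∧ n 2 = 2) ∨ (k = 3 ∧ n 2 = 1) := by
    rw [← Int.neg_modEq_neg, neg_neg,
      Int.modEq_one_iff_exists_int_inv_fract (by omega) hcop.neg_left, hfract_neg,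
      exists_int_inv_one_sub_inv_cfVal_iff hn2 hnk hk]
  rw [hone, hneg_one]
  tauto

/-- For coprime `p > q ≥ 2` with `p/q = [n₁, …, n_k]`, `k ≥ 2`, all `n_j ≥ 1` and
`n_k ≥ 2`: `p ≡ ±1 (mod q)` if and only if `k = 2`, or `k = 3` and `n₂ = 1`. -/
theorem stmt13 (p q : ℤ) (hq : 2 ≤ q) (hpq : q < p) (hcop : IsCoprime p q)
    (k : ℕ) (hk : 2 ≤ k) (n : ℕ → ℕ) (hn : ∀ j, 1 ≤ j → j ≤ k → 1 ≤ n j)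
    (hnk : 2 ≤ n k) (hcf : (p : ℚ) / q = cfVal n 1 k) :
    (p ≡ 1 [ZMOD q] ∨ p ≡ -1 [ZMOD q]) ↔ (k = 2 ∨ (k = 3 ∧ n 2 = 1)) :=
  stmt13_general p q hq hcop k hk n hn hnk hcf
end
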